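/- A probability kernel σ on [0,1] is Blackwell order preserving if and only if for every probability measure μ on [0,1] whose support consists of at most two points, σ∘δ_{μ̄} ⪯_B σ∘μ, where δ_{μ̄} denotes the Dirac measure at the barycenter μ̄ of μ. -/

import Mathlib

open MeasureTheory Set
open scoped ENNReal unitInterval Classical

noncomputable section

namespace Persuasion

/-- Total mass of a measure on the unit interval. -/
def tmass (μ : Measure I) : ℝ := (μ univ).toReal

/-- Integral of the identity. -/
def intg (μ : Measure I) : ℝ := ∫ x, (x : ℝ) ∂μ

/-- Barycenter. -/
def bary (μ : Measure I) : ℝ := intg μ / tmass μ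

/-- Blackwell order: `BLE μ ν` means `μ ⪯_B ν`. -/
def BLE (μ ν : Measure I) : Prop :=
  ∀ f : ℝ → ℝ, ContinuousOn f (Icc (0:ℝ) 1) → ConcaveOn ℝ (Icc (0:ℝ) 1) f →
    (∫ x, f (x : ℝ) ∂ν) / tmass ν ≤ (∫ x, f (x : ℝ) ∂μ) / tmass μ

/-- First order stochastic dominance `λ ⪯_F μ`. -/
def FLE (lam mu : Measure I) : Prop :=
  ∀ x : ℝ, lam {y : I | x ≤ (y : ℝ)} ≤ mu {y : I | x ≤ (y : ℝ)}

/-- A probability kernel with the martingale (barycenter) property. -/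
structure ProbKernel where
  k : I → Measure I
  meas : Measurable k
  prob : ∀ x, IsProbabilityMeasure (k x)
  bary_eq : ∀ x : I, ∫ y, (y : ℝ) ∂(k x) = (x : ℝ)

/-- Pushforward of a measure through a kernel. -/
def push (K : ProbKernel) (μ : Measure I) : Measure I := μ.bind K.k

/-- Blackwell order preserving kernels. -/
def BlackwellPreserving (K : ProbKernel) : Prop :=
  ∀ μ ν : Measure I, IsProbabilityMeasure μ → IsProbabilityMeasure ν →
    bary μ = bary ν → BLE μ ν → BLE (push K μ) (push K ν)

/-- FOSD kernel. -/
structure FOSDKernel where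
  k : I → Measure I
  meas : Measurable k
  prob : ∀ x, IsProbabilityMeasure (k x)
  up : ∀ x : I, k x {y : I | (x : ℝ) ≤ (y : ℝ)} = 1

/-- Domination order `λ ⪯_D μ`. -/
def DomLE (lam mu : Measure I) : Prop :=
  ∃ (φ : FOSDKernel) (ρ : ProbKernel), ((lam.bind φ.k).bind ρ.k) ≤ mu

/-- Interval measure for `μ` with threshold `l`. -/
def IsIntervalMeasure (l : ℝ) (μ ν : Measure I) : Prop :=
  ν ≤ μ ∧ bary ν = l ∧
    ∃ y₁ y₂ : ℝ, 0 ≤ y₁ ∧ y₁ ≤ y₂ ∧ y₂ ≤ 1 ∧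
      ν.restrict {x : I | y₁ < (x : ℝ) ∧ (x : ℝ) < y₂} =
        μ.restrict {x : I | y₁ < (x : ℝ) ∧ (x : ℝ) < y₂} ∧
      ν {x : I | (x : ℝ) < y₁ ∨ y₂ < (x : ℝ)} = 0

/-- Greedy measure predicate. -/
def IsGreedy (l : ℝ) (μ ν : Measure I) : Prop :=
  ν ≤ μ ∧ bary ν = l ∧
    ∃ y : ℝ, 0 ≤ y ∧ y ≤ 1 ∧
      ν.restrict {x : I | y < (x : ℝ)} = μ.restrict {x : I | y < (x : ℝ)} ∧
      ν {x : I | (x : ℝ) < y} = 0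

/-- The greedy measure (zero if none exists). -/
def greedy (l : ℝ) (μ : Measure I) : Measure I :=
  if h : ∃ ν, IsGreedy l μ ν then h.choose else 0

/-- Greedy mass. -/
def gmass (l : ℝ) (μ : Measure I) : ℝ := tmass (greedy l μ)

/-- Sequence of residual measures generated by a policy
(internal period `t : ℕ` corresponds to the paper's period `t+1`). -/
def policySeq (σk : ℕ → ProbKernel) (μ₁ : Measure I) (ν : ℕ → Measure I) : ℕ → Measure I
  | 0 => μ₁
  | t + 1 => push (σk t) (policySeq σk μ₁ ν t - ν t)

/-- Feasibility of a policy for horizon `T`. -/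
def Feasible (T : ℕ∞) (l : ℝ) (σk : ℕ → ProbKernel) (μ₁ : Measure I) (ν : ℕ → Measure I) : Prop :=
  (∀ t : ℕ, (t : ℕ∞) < T →
      ν t ≤ policySeq σk μ₁ ν t ∧ l * tmass (ν t) ≤ intg (ν t)) ∧
  (∀ t : ℕ, ¬ (t : ℕ∞) < T → ν t = 0)

/-- Value of a policy (the weight `w t` is the paper's `w_{t+1}`). -/
def value (T : ℕ∞) (w : ℕ → ℝ) (ν : ℕ → Measure I) : ℝ≥0∞ :=
  ∑' t : ℕ, if (t : ℕ∞) < T then ENNReal.ofReal (w t) * (ν t univ) else 0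

/-- The sender's value: supremum over feasible policies. -/
def senderValue (T : ℕ∞) (l : ℝ) (σk : ℕ → ProbKernel) (μ₁ : Measure I) (w : ℕ → ℝ) : ℝ≥0∞ :=
  ⨆ (ν : ℕ → Measure I) (_ : Feasible T l σk μ₁ ν), value T w ν

/-- Greedy state/action sequence with horizon `T`. -/
def gSeq (T : ℕ∞) (l : ℝ) (σk : ℕ → ProbKernel) (μ₁ : Measure I) : ℕ → Measure I × Measure I
  | 0 => (μ₁, if ((0 : ℕ) : ℕ∞) < T then greedy l μ₁ else 0)
  | t + 1 =>
      (push (σk t) ((gSeq T l σk μ₁ t).1 - (gSeq T l σk μ₁ t).2),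
        if ((t + 1 : ℕ) : ℕ∞) < T then
          greedy l (push (σk t) ((gSeq T l σk μ₁ t).1 - (gSeq T l σk μ₁ t).2)) else 0)

/-- The greedy policy. -/
def greedyPolicy (T : ℕ∞) (l : ℝ) (σk : ℕ → ProbKernel) (μ₁ : Measure I) (t : ℕ) : Measure I :=
  (gSeq T l σk μ₁ t).2

/-- Grids: `Z = ℤ ∩ [a,b]` is captured by order-connectedness. -/
structure Grid where
  Z : Set ℤ
  ordConn : Z.OrdConnected
  z : ℤ → I
  mono : ∀ i j, i ∈ Z → j ∈ Z → i < j → (z i : ℝ) < (z j : ℝ)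

/-- The random-walk kernel on a grid. -/
def IsRWKernel (G : Grid) (K : ProbKernel) : Prop :=
  ∀ j ∈ G.Z,
    ((j - 1 ∈ G.Z → j + 1 ∈ G.Z →
        K.k (G.z j) =
          ENNReal.ofReal (((G.z (j + 1) : ℝ) - (G.z j : ℝ)) /
              ((G.z (j + 1) : ℝ) - (G.z (j - 1) : ℝ))) • Measure.dirac (G.z (j - 1)) +
          ENNReal.ofReal (((G.z j : ℝ) - (G.z (j - 1) : ℝ)) /
              ((G.z (j + 1) : ℝ) - (G.z (j - 1) : ℝ))) • Measure.dirac (G.z (j + 1)))) ∧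
    ((j - 1 ∉ G.Z ∨ j + 1 ∉ G.Z) → K.k (G.z j) = Measure.dirac (G.z j))

/-- `D(Γ)` for threshold `l`. -/
def Dval (G : Grid) (l : ℝ) : ℝ :=
  sSup {d : ℝ | ∃ j : ℤ, j ≤ 0 ∧ j - 1 ∈ G.Z ∧
    d = (l - (G.z (j - 1) : ℝ)) / (l - (G.z j : ℝ))}

/-- Endpoint index of a grid. -/
def IsEndpointIdx (G : Grid) (j : ℤ) : Prop := j ∈ G.Z ∧ (j - 1 ∉ G.Z ∨ j + 1 ∉ G.Z)

/-- The measure is supported on the grid. -/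
def SuppOnGrid (G : Grid) (μ : Measure I) : Prop :=
  μ {x : I | ¬ ∃ j ∈ G.Z, x = G.z j} = 0

/-- `Δ*(Γ)`: supported on even- or on odd-indexed points (endpoints count as both). -/
def MemDeltaStar (G : Grid) (μ : Measure I) : Prop :=
  (μ {x : I | ¬ ∃ j ∈ G.Z, (Even j ∨ IsEndpointIdx G j) ∧ x = G.z j} = 0) ∨
  (μ {x : I | ¬ ∃ j ∈ G.Z, (Odd j ∨ IsEndpointIdx G j) ∧ x = G.z j} = 0)


-- Auxiliary lemmas
lemma cont_comp {f : ℝ → ℝ} (hf : ContinuousOn f (Icc (0:ℝ) 1)) :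
    Continuous fun y : I => f (y : ℝ) :=
  hf.comp_continuous continuous_subtype_val fun x => x.2

lemma integrable_of_cont {X : Type*} [TopologicalSpace X] [CompactSpace X] [MeasurableSpace X]
    [OpensMeasurableSpace X] [T2Space X] {f : X → ℝ} (hf : Continuous f) (μ : Measure X)
    [IsFiniteMeasure μ] : Integrable f μ :=
  hf.integrable_of_hasCompactSupport
    (IsCompact.of_isClosed_subset isCompact_univ (isClosed_tsupport _) (subset_univ _))

lemma integrable_coe (μ : Measure I) [IsFiniteMeasure μ] :
    Integrable (fun y : I => (y : ℝ)) μ :=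
  integrable_of_cont continuous_subtype_val μ

lemma tmass_prob (μ : Measure I) [IsProbabilityMeasure μ] : tmass μ = 1 := by simp [tmass]

lemma push_univ (K : ProbKernel) (μ : Measure I) : (push K μ) univ = μ univ := by
  rw [push, Measure.bind_apply MeasurableSet.univ K.meas.aemeasurable]
  have h : ∀ x : I, K.k x univ = 1 := fun x => (K.prob x).measure_univ
  simp [h]

lemma jensen {f : ℝ → ℝ} (hfc : ContinuousOn f (Icc (0:ℝ) 1))
    (hfcc : ConcaveOn ℝ (Icc (0:ℝ) 1) f) (m : Measure I) [IsProbabilityMeasure m] :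
    ∫ y, f (y : ℝ) ∂m ≤ f (∫ y, (y : ℝ) ∂m) :=
  hfcc.le_map_integral hfc isClosed_Icc (Filter.Eventually.of_forall fun y => y.2)
    (integrable_coe m) (integrable_of_cont (cont_comp hfc) m)

lemma integral_push (K : ProbKernel) (μ : Measure I) [IsFiniteMeasure μ] {f : I → ℝ}
    (hf : Continuous f) :
    ∫ y, f y ∂(push K μ) = ∫ x, ∫ y, f y ∂(K.k x) ∂μ := by
  let κ : ProbabilityTheory.Kernel I I := ⟨K.k, K.meas⟩
  haveI : ProbabilityTheory.IsMarkovKernel κ := ⟨fun x => K.prob x⟩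
  have hbind : push K μ = (μ.compProd κ).map Prod.snd := by
    ext s hs
    rw [Measure.map_apply measurable_snd hs, Measure.compProd_apply (measurable_snd hs),
      push, Measure.bind_apply hs K.meas.aemeasurable]
    rfl
  rw [hbind, integral_map measurable_snd.aemeasurable hf.aestronglyMeasurable,
    Measure.integral_compProd (f := fun p : I × I => f p.2)
      (integrable_of_cont (hf.comp continuous_snd) _)]
  rfl

/-- value of `f∘coe` against the kernel. -/
def gfun (K : ProbKernel) (f : ℝ → ℝ) (x : I) : ℝ := ∫ y, f (y : ℝ) ∂(K.k x)

lemma kk_endpoint_zero (K : ProbKernel) (f : ℝ → ℝ) : gfun K f 0 = f 0 := by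
  haveI := K.prob 0
  have h0 : ∫ y, (y : ℝ) ∂(K.k 0) = 0 := by simpa using K.bary_eq 0
  have hae : (fun y : I => (y : ℝ)) =ᵐ[K.k 0] 0 :=
    (integral_eq_zero_iff_of_nonneg (fun y => y.2.1) (integrable_coe _)).1 h0
  have : (fun y : I => f (y : ℝ)) =ᵐ[K.k 0] fun _ => f 0 := by
    filter_upwards [hae] with y hy
    simp only [Pi.zero_apply] at hy
    rw [hy]
  rw [gfun, integral_congr_ae this]
  simp

lemma kk_endpoint_one (K : ProbKernel) (f : ℝ → ℝ) : gfun K f 1 = f 1 := by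
  haveI := K.prob 1
  have h1 : ∫ y, (1 - (y : ℝ)) ∂(K.k 1) = 0 := by
    rw [integral_sub (integrable_const 1) (integrable_coe _)]
    have := K.bary_eq 1
    simp [this]
  have hae : (fun y : I => (1 - (y : ℝ))) =ᵐ[K.k 1] 0 :=
    (integral_eq_zero_iff_of_nonneg (fun y => by simpa using y.2.2)
      ((integrable_const (1:ℝ)).sub (integrable_coe _))).1 h1
  have : (fun y : I => f (y : ℝ)) =ᵐ[K.k 1] fun _ => f 1 := by
    filter_upwards [hae] with y hy
    simp only [Pi.zero_apply] at hy
    have : (y : ℝ) = 1 := by linarith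
    rw [this]
  rw [gfun, integral_congr_ae this]
  simp



/-- The binary-split hypothesis. -/
def BinaryHyp (K : ProbKernel) : Prop :=
  ∀ μ : Measure I, IsProbabilityMeasure μ →
    (∃ x y : I, μ (({x, y} : Set I)ᶜ) = 0) →
    ∀ b : I, (b : ℝ) = bary μ →
      BLE (push K (Measure.dirac b)) (push K μ)

lemma push_dirac (K : ProbKernel) (b : I) : push K (Measure.dirac b) = K.k b :=
  Measure.dirac_bind K.meas b

lemma binary_ineq (K : ProbKernel) (H : BinaryHyp K) {f : ℝ → ℝ}
    (hfc : ContinuousOn f (Icc (0:ℝ) 1)) (hfcc : ConcaveOn ℝ (Icc (0:ℝ) 1) f)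
    (x y : I) {a : ℝ} (ha : 0 ≤ a) (ha1 : a ≤ 1) (b : I)
    (hb : (b : ℝ) = a * (x : ℝ) + (1 - a) * (y : ℝ)) :
    a * gfun K f x + (1 - a) * gfun K f y ≤ gfun K f b := by
  have ha' : (0:ℝ) ≤ 1 - a := by linarith
  set μab : Measure I :=
    ENNReal.ofReal a • Measure.dirac x + ENNReal.ofReal (1 - a) • Measure.dirac y with hμab
  have huniv : μab univ = 1 := by
    simp [hμab, ← ENNReal.ofReal_add ha ha']
  haveI hprob : IsProbabilityMeasure μab := ⟨huniv⟩
  have hsupp : μab (({x, y} : Set I)ᶜ) = 0 := by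
    simp [hμab, Measure.dirac_apply]
  have hintg : intg μab = a * (x : ℝ) + (1 - a) * (y : ℝ) := by
    rw [intg, hμab, integral_add_measure
      ((integrable_coe _).smul_measure ENNReal.ofReal_ne_top)
      ((integrable_coe _).smul_measure ENNReal.ofReal_ne_top),
      integral_smul_measure, integral_smul_measure, integral_dirac, integral_dirac,
      ENNReal.toReal_ofReal ha, ENNReal.toReal_ofReal ha']
    simp
  have hbary : (b : ℝ) = bary μab := by
    rw [bary, tmass_prob, div_one, hintg, hb]
  have h := H μab hprob ⟨x, y, hsupp⟩ b hbary f hfc hfcc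
  have hdec : push K μab = ENNReal.ofReal a • K.k x + ENNReal.ofReal (1 - a) • K.k y := by
    ext s hs
    rw [push, Measure.bind_apply hs K.meas.aemeasurable]
    have hm : Measurable fun z : I => K.k z s := (Measure.measurable_coe hs).comp K.meas
    rw [hμab, lintegral_add_measure, lintegral_smul_measure, lintegral_smul_measure,
      lintegral_dirac' _ hm, lintegral_dirac' _ hm]
    simp
  haveI : IsProbabilityMeasure (K.k x) := K.prob x
  haveI : IsProbabilityMeasure (K.k y) := K.prob y
  haveI : IsProbabilityMeasure (K.k b) := K.prob b
  have hint : ∫ z, f (z : ℝ) ∂(push K μab) = a * gfun K f x + (1 - a) * gfun K f y := by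
    rw [hdec, integral_add_measure
      ((integrable_of_cont (cont_comp hfc) _).smul_measure ENNReal.ofReal_ne_top)
      ((integrable_of_cont (cont_comp hfc) _).smul_measure ENNReal.ofReal_ne_top),
      integral_smul_measure, integral_smul_measure,
      ENNReal.toReal_ofReal ha, ENNReal.toReal_ofReal ha']
    rfl
  have ht1 : tmass (push K μab) = 1 := by rw [tmass, push_univ, huniv, ENNReal.toReal_one]
  have ht2 : tmass (push K (Measure.dirac b)) = 1 := by
    rw [push_dirac, tmass_prob]
  rw [ht1, ht2, div_one, div_one, hint, push_dirac] at h
  exact h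



/-- Extension of `gfun` to `ℝ`. -/
def Gfun (K : ProbKernel) (f : ℝ → ℝ) (t : ℝ) : ℝ :=
  if h : t ∈ Icc (0:ℝ) 1 then gfun K f ⟨t, h⟩ else 0

lemma Gfun_coe (K : ProbKernel) (f : ℝ → ℝ) (x : I) : Gfun K f (x : ℝ) = gfun K f x := by
  rw [Gfun, dif_pos x.2]

lemma Gfun_concaveOn (K : ProbKernel) (H : BinaryHyp K) {f : ℝ → ℝ}
    (hfc : ContinuousOn f (Icc (0:ℝ) 1)) (hfcc : ConcaveOn ℝ (Icc (0:ℝ) 1) f) :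
    ConcaveOn ℝ (Icc (0:ℝ) 1) (Gfun K f) := by
  refine ⟨convex_Icc 0 1, fun u hu v hv p q hp hq hpq => ?_⟩
  have hq' : q = 1 - p := by linarith
  subst hq'
  have hp1 : p ≤ 1 := by linarith
  have hmem : p • u + (1 - p) • v ∈ Icc (0:ℝ) 1 := convex_Icc 0 1 hu hv hp hq hpq
  have h := binary_ineq K H hfc hfcc ⟨u, hu⟩ ⟨v, hv⟩ hp hp1
    ⟨p • u + (1 - p) • v, hmem⟩ (by simp [smul_eq_mul])
  simp only [smul_eq_mul] at hmem h ⊢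
  rw [Gfun, Gfun, Gfun, dif_pos hu, dif_pos hv, dif_pos hmem]
  exact h

lemma Gfun_zero (K : ProbKernel) (f : ℝ → ℝ) : Gfun K f 0 = f 0 := by
  rw [show (0:ℝ) = ((0:I) : ℝ) by simp, Gfun_coe]
  exact kk_endpoint_zero K f

lemma Gfun_one (K : ProbKernel) (f : ℝ → ℝ) : Gfun K f 1 = f 1 := by
  rw [show (1:ℝ) = ((1:I) : ℝ) by simp, Gfun_coe]
  exact kk_endpoint_one K f

lemma Gfun_continuousOn (K : ProbKernel) (H : BinaryHyp K) {f : ℝ → ℝ}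
    (hfc : ContinuousOn f (Icc (0:ℝ) 1)) (hfcc : ConcaveOn ℝ (Icc (0:ℝ) 1) f) :
    ContinuousOn (Gfun K f) (Icc (0:ℝ) 1) := by
  have hGc := Gfun_concaveOn K H hfc hfcc
  have hub : ∀ t ∈ Icc (0:ℝ) 1, Gfun K f t ≤ f t := by
    intro t ht
    rw [Gfun, dif_pos ht]
    haveI := K.prob ⟨t, ht⟩
    have h := jensen hfc hfcc (K.k ⟨t, ht⟩)
    rwa [K.bary_eq ⟨t, ht⟩] at h
  have hlb : ∀ t ∈ Icc (0:ℝ) 1, (1 - t) * f 0 + t * f 1 ≤ Gfun K f t := by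
    intro t ht
    have h := hGc.2 (left_mem_Icc.2 zero_le_one) (right_mem_Icc.2 zero_le_one)
      (by linarith [ht.2] : (0:ℝ) ≤ 1 - t) ht.1 (by ring)
    simpa [Gfun_zero, Gfun_one] using h
  have hL : Continuous fun s : ℝ => (1 - s) * f 0 + s * f 1 := by continuity
  intro t ht
  rcases eq_or_lt_of_le ht.1 with h0 | h0
  · -- t = 0
    rw [ContinuousWithinAt, ← h0, Gfun_zero]
    have hLt : Filter.Tendsto (fun s : ℝ => (1 - s) * f 0 + s * f 1)
        (nhdsWithin 0 (Icc (0:ℝ) 1)) (nhds (f 0)) := by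
      have h := (hL.tendsto 0).mono_left (nhdsWithin_le_nhds (s := Icc (0:ℝ) 1))
      simpa using h
    refine tendsto_of_tendsto_of_tendsto_of_le_of_le' hLt
      (hfc 0 (left_mem_Icc.2 zero_le_one)) ?_ ?_
    · filter_upwards [self_mem_nhdsWithin] with s hs; exact hlb s hs
    · filter_upwards [self_mem_nhdsWithin] with s hs; exact hub s hs
  rcases eq_or_lt_of_le ht.2 with h1 | h1
  · -- t = 1
    rw [ContinuousWithinAt, h1, Gfun_one]
    have hLt : Filter.Tendsto (fun s : ℝ => (1 - s) * f 0 + s * f 1)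
        (nhdsWithin 1 (Icc (0:ℝ) 1)) (nhds (f 1)) := by
      have h := (hL.tendsto 1).mono_left (nhdsWithin_le_nhds (s := Icc (0:ℝ) 1))
      simpa using h
    refine tendsto_of_tendsto_of_tendsto_of_le_of_le' hLt
      (hfc 1 (right_mem_Icc.2 zero_le_one)) ?_ ?_
    · filter_upwards [self_mem_nhdsWithin] with s hs; exact hlb s hs
    · filter_upwards [self_mem_nhdsWithin] with s hs; exact hub s hs
  · -- interior
    have hmem : Ioo (0:ℝ) 1 ∈ nhds t := Ioo_mem_nhds h0 h1
    have hint : ContinuousOn (Gfun K f) (Ioo (0:ℝ) 1) := by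
      have := hGc.continuousOn_interior
      rwa [interior_Icc] at this
    exact (hint.continuousAt hmem).continuousWithinAt

theorem blackwell_preserving_iff_binary' (K : ProbKernel) :
    BlackwellPreserving K ↔ BinaryHyp K := by
  constructor
  · intro hK μ hμ _ b hb
    haveI := hμ
    have hbd : bary (Measure.dirac b) = bary μ := by
      have h1 : bary (Measure.dirac b) = (b : ℝ) := by
        simp [bary, intg, tmass, integral_dirac]
      rw [h1, hb]
    refine hK _ _ (by infer_instance) hμ hbd ?_
    intro f hfc hfcc
    rw [tmass_prob, tmass_prob, div_one, div_one, integral_dirac]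
    have h := jensen hfc hfcc μ
    have hc : ∫ y, (y : ℝ) ∂μ = (b : ℝ) := by
      rw [hb, bary, intg, tmass_prob, div_one]
    rwa [hc] at h
  · intro H μ ν hμ hν _ hble f hfc hfcc
    haveI := hμ; haveI := hν
    have ht1 : tmass (push K μ) = 1 := by rw [tmass, push_univ]; simp
    have ht2 : tmass (push K ν) = 1 := by rw [tmass, push_univ]; simp
    rw [ht1, ht2, div_one, div_one,
      integral_push K μ (cont_comp hfc), integral_push K ν (cont_comp hfc)]
    have h := hble (Gfun K f) (Gfun_continuousOn K H hfc hfcc) (Gfun_concaveOn K H hfc hfcc)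
    rw [tmass_prob, tmass_prob, div_one, div_one] at h
    have e1 : ∫ x, Gfun K f (x : ℝ) ∂μ = ∫ x, ∫ y, f (y : ℝ) ∂(K.k x) ∂μ :=
      integral_congr_ae (Filter.Eventually.of_forall fun x => Gfun_coe K f x)
    have e2 : ∫ x, Gfun K f (x : ℝ) ∂ν = ∫ x, ∫ y, f (y : ℝ) ∂(K.k x) ∂ν :=
      integral_congr_ae (Filter.Eventually.of_forall fun x => Gfun_coe K f x)
    rw [e1, e2] at h
    exact h


/-- a kernel is Blackwell order preserving iff it preserves the order
on binary-supported measures versus the Dirac at their barycenter. -/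
theorem blackwell_preserving_iff_binary (K : ProbKernel) :
    BlackwellPreserving K ↔
      ∀ μ : Measure I, IsProbabilityMeasure μ →
        (∃ x y : I, μ (({x, y} : Set I)ᶜ) = 0) →
        ∀ b : I, (b : ℝ) = bary μ →
          BLE (push K (Measure.dirac b)) (push K μ) := by
  exact blackwell_preserving_iff_binary' K

end Persuasion
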